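/- On the polynomial Weyl algebra A = ℂ[x,p][ħ] with Moyal product f*g = f·exp((iħ/2)(∂⃖_x ∂⃗_p − ∂⃖_p ∂⃗_x))·g (a finite sum on polynomials), the Moyal product is associative. -/

import Mathlib

/-!
The Moyal product is `μ ∘ exp B` with the constant bidifferential operator
`B = (iħ/2)(∂ₓ ⊗ ∂ₚ - ∂ₚ ⊗ ∂ₓ)`. Expanding either bracketing of a triple product with the
Leibniz rule produces the same triple sum `μ ∘ exp (B₁₂ + B₁₃ + B₂₃)`. On the coefficients this
is the identity `c (q + r) * C(q + r, q) = c q * c r` for `c (k, l) = (iħ/2)^k (-iħ/2)^l / (k! l!)`.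
All sums may be cut off at a box `[0, N]²` with `N` the sum of the total degrees.
-/

noncomputable section

open MvPolynomial

/-- The algebra `ℂ[x,p][ħ]`, with `x, p` the two `MvPolynomial` variables and
`ħ = Polynomial.X` in the coefficient ring. -/
abbrev WeylCarrier := MvPolynomial (Fin 2) (Polynomial ℂ)

/-- The Moyal product
`f*g = Σ_{k,l≥0} (iħ/2)^{k+l} (−1)^l/(k!l!) (∂_x^k ∂_p^l f)(∂_p^k ∂_x^l g)`
(a finite sum on polynomials). -/
def moyal (f g : WeylCarrier) : WeylCarrier :=
  ∑ᶠ kl : ℕ × ℕ,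
    ((Polynomial.C ((Complex.I / 2) ^ (kl.1 + kl.2) * (-1 : ℂ) ^ kl.2 /
        (kl.1.factorial * kl.2.factorial)) * Polynomial.X ^ (kl.1 + kl.2) :
      Polynomial ℂ)) •
      ((pderiv (0 : Fin 2))^[kl.1] ((pderiv (1 : Fin 2))^[kl.2] f) *
        (pderiv (1 : Fin 2))^[kl.1] ((pderiv (0 : Fin 2))^[kl.2] g))

open Finset

namespace Derivation

variable {R A : Type*} [CommSemiring R] [CommSemiring A] [Algebra R A]

theorem pow_apply_mul (D : Derivation R A A) (n : ℕ) (a b : A) :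
    ((D : Module.End R A) ^ n) (a * b) = ∑ ij ∈ antidiagonal n,
      n.choose ij.1 • (((D : Module.End R A) ^ ij.1) a * ((D : Module.End R A) ^ ij.2) b) := by
  simp only [Module.End.coe_pow, Derivation.coeFn_coe]
  induction n with
  | zero => simp
  | succ n ih =>
    rw [sum_antidiagonal_choose_succ_nsmul (fun i j => D^[i] a * D^[j] b) n,
      Function.iterate_succ_apply', ih, map_sum, ← sum_add_distrib]
    refine sum_congr rfl fun ⟨i, j⟩ hij => ?_
    rw [n.choose_symm_of_eq_add (HasAntidiagonal.mem_antidiagonal.1 hij).symm, map_nsmul,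
      ← smul_add, leibniz, smul_eq_mul, smul_eq_mul]
    simp only [Function.iterate_succ_apply']
    congr 1
    ring

end Derivation

namespace Finset

instance instHasAntidiagonalProd {A B : Type*} [AddMonoid A] [AddMonoid B] [HasAntidiagonal A]
    [HasAntidiagonal B] : HasAntidiagonal (A × B) where
  antidiagonal s :=
    (antidiagonal s.1 ×ˢ antidiagonal s.2).map (Equiv.prodProdProdComm A A B B).toEmbedding
  mem_antidiagonal {s x} := by
    simp [Prod.ext_iff]

theorem sum_Iic_sum_antidiagonal {A M : Type*} [AddCommMonoid A] [PartialOrder A]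
    [CanonicallyOrderedAdd A] [LocallyFiniteOrderBot A] [HasAntidiagonal A] [DecidableEq A]
    [AddCommMonoid M] (b : A) (F : A → A → M) (hF : ∀ q r, ¬ q + r ≤ b → F q r = 0) :
    ∑ s ∈ Iic b, ∑ x ∈ antidiagonal s, F x.1 x.2 = ∑ q ∈ Iic b, ∑ r ∈ Iic b, F q r := by
  rw [← sum_product', ← sum_filter_of_ne (p := fun x : A × A => x.1 + x.2 ∈ Iic b)
      fun (x : A × A) _ hx => mem_Iic.2 (not_not.1 (mt (hF x.1 x.2) hx)),
    ← sum_fiberwise_eq_sum_filter]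
  refine sum_congr rfl fun s hs => sum_congr (ext fun x => ?_) fun _ _ => rfl
  simp only [HasAntidiagonal.mem_antidiagonal, mem_filter, mem_product, mem_Iic] at hs ⊢
  exact ⟨fun h => ⟨⟨le_self_add.trans (h ▸ hs), le_add_self.trans (h ▸ hs)⟩, h⟩, And.right⟩

theorem sum_antidiagonal_prod {A B M : Type*} [AddMonoid A] [AddMonoid B] [HasAntidiagonal A]
    [HasAntidiagonal B] [AddCommMonoid M] (s : A × B) (F : (A × B) × (A × B) → M) :
    ∑ x ∈ antidiagonal s, F x =
      ∑ a ∈ antidiagonal s.1, ∑ b ∈ antidiagonal s.2, F ((a.1, b.1), (a.2, b.2)) := by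
  rw [← sum_product']
  exact sum_map _ _ _

end Finset

namespace MvPolynomial

variable {σ R : Type*} [CommSemiring R]

theorem pderiv_comm (i j : σ) (f : MvPolynomial σ R) :
    pderiv i (pderiv j f) = pderiv j (pderiv i f) := by
  classical
  induction f using MvPolynomial.induction_on with
  | C a => simp
  | add p q hp hq => simp only [map_add, hp, hq]
  | mul_X p k hp =>
    simp only [pderiv_mul, map_add, hp, pderiv_X, Pi.single_apply, apply_ite, pderiv_one,
      map_zero]
    split_ifs <;> ring

theorem coeff_iterate_pderiv_eq_zero {i : σ} {n : ℕ} {f : MvPolynomial σ R} {m : σ →₀ ℕ}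
    (h : coeff (m + Finsupp.single i n) f = 0) : coeff m ((pderiv i)^[n] f) = 0 := by
  induction n generalizing f with
  | zero => simpa using h
  | succ n ih =>
    rw [Function.iterate_succ_apply]
    refine ih ?_
    rw [coeff_pderiv, add_assoc, ← Finsupp.single_add, h, zero_mul]

def iteratedPDeriv (i j : σ) (s : ℕ × ℕ) : Module.End R (MvPolynomial σ R) :=
  (pderiv (R := R) i : Module.End R (MvPolynomial σ R)) ^ s.1 *
    (pderiv (R := R) j : Module.End R (MvPolynomial σ R)) ^ s.2

theorem commute_pderiv (i j : σ) :
    Commute (pderiv (R := R) i : Module.End R (MvPolynomial σ R))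
      (pderiv (R := R) j : Module.End R (MvPolynomial σ R)) :=
  LinearMap.ext fun f => pderiv_comm i j f

theorem iteratedPDeriv_apply (i j : σ) (s : ℕ × ℕ) (f : MvPolynomial σ R) :
    iteratedPDeriv i j s f = (pderiv i)^[s.1] ((pderiv j)^[s.2] f) := by
  simp only [iteratedPDeriv, Module.End.mul_apply, Module.End.coe_pow, Derivation.coeFn_coe]

theorem iteratedPDeriv_swap (i j : σ) (s : ℕ × ℕ) :
    iteratedPDeriv (R := R) i j s.swap = iteratedPDeriv j i s :=
  ((commute_pderiv i j).pow_pow _ _).eq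

theorem iteratedPDeriv_iteratedPDeriv (i j : σ) (s t : ℕ × ℕ) (f : MvPolynomial σ R) :
    iteratedPDeriv i j s (iteratedPDeriv i j t f) = iteratedPDeriv i j (s + t) f := by
  rw [← Module.End.mul_apply, iteratedPDeriv, iteratedPDeriv, iteratedPDeriv,
    ((commute_pderiv j i).pow_pow _ _).mul_mul_mul_comm, ← pow_add, ← pow_add]
  rfl

theorem iteratedPDeriv_mul (i j : σ) (s : ℕ × ℕ) (u v : MvPolynomial σ R) :
    iteratedPDeriv i j s (u * v) = ∑ x ∈ antidiagonal s,
      (s.1.choose x.1.1 * s.2.choose x.1.2) •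
        (iteratedPDeriv i j x.1 u * iteratedPDeriv i j x.2 v) := by
  rw [sum_antidiagonal_prod, sum_comm, iteratedPDeriv, Module.End.mul_apply,
    Derivation.pow_apply_mul, map_sum]
  refine sum_congr rfl fun y _ => ?_
  rw [map_nsmul, Derivation.pow_apply_mul, smul_sum]
  refine sum_congr rfl fun x _ => ?_
  rw [smul_smul, mul_comm]
  rfl

theorem iteratedPDeriv_eq_zero_of_totalDegree_lt {i j : σ} {s : ℕ × ℕ} {f : MvPolynomial σ R}
    (h : f.totalDegree < s.1 + s.2) : iteratedPDeriv i j s f = 0 := by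
  ext m
  rw [iteratedPDeriv_apply, coeff_zero]
  refine coeff_iterate_pderiv_eq_zero (coeff_iterate_pderiv_eq_zero
    (coeff_eq_zero_of_totalDegree_lt ?_))
  rw [← Finsupp.degree_apply, map_add, map_add, Finsupp.degree_single, Finsupp.degree_single]
  omega

theorem iteratedPDeriv_eq_zero_of_not_le {i j : σ} {s : ℕ × ℕ} {f : MvPolynomial σ R} {N : ℕ}
    (hf : f.totalDegree ≤ N) (hs : ¬ s ≤ (N, N)) : iteratedPDeriv i j s f = 0 := by
  refine iteratedPDeriv_eq_zero_of_totalDegree_lt ?_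
  rw [Prod.le_def, not_and_or] at hs
  omega

end MvPolynomial

def moyalCoeff (s : ℕ × ℕ) : Polynomial ℂ :=
  Polynomial.C ((Complex.I / 2) ^ (s.1 + s.2) * (-1 : ℂ) ^ s.2 /
    (s.1.factorial * s.2.factorial)) * Polynomial.X ^ (s.1 + s.2)

theorem moyalCoeff_add_mul_choose (q r : ℕ × ℕ) :
    moyalCoeff (q + r) * (((q + r).1.choose q.1 * (q + r).2.choose q.2 : ℕ) : Polynomial ℂ) =
      moyalCoeff q * moyalCoeff r := by
  obtain ⟨a, b⟩ := q
  obtain ⟨c, d⟩ := r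
  have hfact (m n : ℕ) :
      ((m + n).factorial : ℂ) = (m + n).choose m * m.factorial * n.factorial := by
    rw [Nat.choose_symm_add]
    exact_mod_cast (Nat.add_choose_mul_factorial_mul_factorial m n).symm
  have hchoose (m n : ℕ) : ((m + n).choose m : ℂ) ≠ 0 :=
    Nat.cast_ne_zero.2 (Nat.choose_pos (Nat.le_add_right m n)).ne'
  have key : (Complex.I / 2) ^ (a + c + (b + d)) * (-1 : ℂ) ^ (b + d) /
        ((a + c).factorial * (b + d).factorial) * (((a + c).choose a * (b + d).choose b : ℕ) : ℂ) =
      (Complex.I / 2) ^ (a + b) * (-1 : ℂ) ^ b / (a.factorial * b.factorial) *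
        ((Complex.I / 2) ^ (c + d) * (-1 : ℂ) ^ d / (c.factorial * d.factorial)) := by
    rw [hfact a c, hfact b d]
    have := hchoose a c
    have := hchoose b d
    push_cast
    field_simp
    ring
  have hC := congrArg Polynomial.C key
  rw [map_mul, map_mul, map_natCast] at hC
  simp only [moyalCoeff, Prod.mk_add_mk]
  linear_combination Polynomial.X ^ (a + c + (b + d)) * hC

theorem moyal_eq_sum (f g : WeylCarrier) {N : ℕ}
    (hN : f.totalDegree ≤ N ∨ g.totalDegree ≤ N) :
    moyal f g = ∑ s ∈ Iic (N, N),
      moyalCoeff s • (iteratedPDeriv 0 1 s f * iteratedPDeriv 0 1 s.swap g) := by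
  have hterm (s : ℕ × ℕ) :
      moyalCoeff s • (iteratedPDeriv 0 1 s f * iteratedPDeriv 0 1 s.swap g) =
        moyalCoeff s • ((pderiv (0 : Fin 2))^[s.1] ((pderiv (1 : Fin 2))^[s.2] f) *
          (pderiv (1 : Fin 2))^[s.1] ((pderiv (0 : Fin 2))^[s.2] g)) := by
    rw [iteratedPDeriv_swap, iteratedPDeriv_apply, iteratedPDeriv_apply]
  refine (finsum_congr fun s => (hterm s).symm).trans
    (finsum_eq_sum_of_support_subset _ fun s hs => ?_)
  rw [coe_Iic, Set.mem_Iic]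
  by_contra hsN
  refine hs ?_
  dsimp only
  rcases hN with hf | hg
  · rw [iteratedPDeriv_eq_zero_of_not_le hf hsN, zero_mul, smul_zero]
  · rw [iteratedPDeriv_eq_zero_of_not_le hg (Prod.swap_le_swap.not.2 hsN), mul_zero, smul_zero]

/-- The term of `μ ∘ exp (B₁₂ + B₁₃ + B₂₃)` in which `p`, `q`, `r` are the orders exchanged
between `(f, g)`, `(f, h)` and `(g, h)`. -/
def moyalTripleTerm (f g h : WeylCarrier) (p q r : ℕ × ℕ) : WeylCarrier :=
  (moyalCoeff p * moyalCoeff q * moyalCoeff r) •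
    (iteratedPDeriv 0 1 (p + q) f * iteratedPDeriv 0 1 (r + p.swap) g *
      iteratedPDeriv 0 1 (q + r).swap h)

theorem moyal_moyal_left_eq_sum (f g h : WeylCarrier) {N : ℕ} (hf : f.totalDegree ≤ N)
    (hh : h.totalDegree ≤ N) :
    moyal (moyal f g) h = ∑ p ∈ Iic (N, N), ∑ q ∈ Iic (N, N), ∑ r ∈ Iic (N, N),
      moyalTripleTerm f g h p q r := by
  calc moyal (moyal f g) h
      = ∑ s ∈ Iic (N, N), moyalCoeff s •
          (iteratedPDeriv 0 1 s (moyal f g) * iteratedPDeriv 0 1 s.swap h) :=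
        moyal_eq_sum _ _ (Or.inr hh)
    _ = ∑ s ∈ Iic (N, N), ∑ x ∈ antidiagonal s, ∑ p ∈ Iic (N, N),
          moyalTripleTerm f g h p x.1 x.2 := by
        refine sum_congr rfl fun s _ => ?_
        rw [moyal_eq_sum f g (Or.inl hf), map_sum, sum_mul, smul_sum, sum_comm]
        refine sum_congr rfl fun p _ => ?_
        rw [map_smul, iteratedPDeriv_mul, smul_sum, sum_mul, smul_sum]
        refine sum_congr rfl fun x hx => ?_
        obtain rfl := HasAntidiagonal.mem_antidiagonal.1 hx
        rw [iteratedPDeriv_iteratedPDeriv, iteratedPDeriv_iteratedPDeriv, moyalTripleTerm,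
          add_comm x.1 p, ← Nat.cast_smul_eq_nsmul (Polynomial ℂ)]
        simp only [smul_mul_assoc, smul_smul]
        congr 1
        linear_combination moyalCoeff p * moyalCoeff_add_mul_choose x.1 x.2
    _ = ∑ q ∈ Iic (N, N), ∑ r ∈ Iic (N, N), ∑ p ∈ Iic (N, N), moyalTripleTerm f g h p q r := by
        refine sum_Iic_sum_antidiagonal (N, N)
          (fun q r => ∑ p ∈ Iic (N, N), moyalTripleTerm f g h p q r)
          fun q r hqr => sum_eq_zero fun p _ => ?_
        rw [moyalTripleTerm, iteratedPDeriv_eq_zero_of_not_le hh (Prod.swap_le_swap.not.2 hqr),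
          mul_zero, smul_zero]
    _ = _ := (sum_congr rfl fun _ _ => sum_comm).trans sum_comm

theorem moyal_moyal_right_eq_sum (f g h : WeylCarrier) {N : ℕ} (hf : f.totalDegree ≤ N)
    (hg : g.totalDegree ≤ N) :
    moyal f (moyal g h) = ∑ p ∈ Iic (N, N), ∑ q ∈ Iic (N, N), ∑ r ∈ Iic (N, N),
      moyalTripleTerm f g h p q r := by
  calc moyal f (moyal g h)
      = ∑ s ∈ Iic (N, N), moyalCoeff s •
          (iteratedPDeriv 0 1 s f * iteratedPDeriv 0 1 s.swap (moyal g h)) :=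
        moyal_eq_sum _ _ (Or.inl hf)
    _ = ∑ s ∈ Iic (N, N), ∑ x ∈ antidiagonal s, ∑ r ∈ Iic (N, N),
          moyalTripleTerm f g h x.1 x.2 r := by
        refine sum_congr rfl fun s _ => ?_
        rw [moyal_eq_sum g h (Or.inl hg), map_sum, mul_sum, smul_sum, sum_comm]
        refine sum_congr rfl fun r _ => ?_
        rw [map_smul, iteratedPDeriv_swap 0 1 s, iteratedPDeriv_mul, smul_sum, mul_sum, smul_sum]
        refine sum_congr rfl fun x hx => ?_
        obtain rfl := HasAntidiagonal.mem_antidiagonal.1 hx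
        simp only [← iteratedPDeriv_swap (0 : Fin 2) 1, iteratedPDeriv_iteratedPDeriv]
        rw [moyalTripleTerm, add_comm x.1.swap, ← Prod.swap_add,
          ← Nat.cast_smul_eq_nsmul (Polynomial ℂ)]
        simp only [mul_smul_comm, smul_smul]
        refine congrArg₂ (· • ·) ?_ (mul_assoc _ _ _).symm
        linear_combination moyalCoeff r * moyalCoeff_add_mul_choose x.1 x.2
    _ = _ := by
        refine sum_Iic_sum_antidiagonal (N, N)
          (fun p q => ∑ r ∈ Iic (N, N), moyalTripleTerm f g h p q r)
          fun p q hpq => sum_eq_zero fun r _ => ?_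
        rw [moyalTripleTerm, iteratedPDeriv_eq_zero_of_not_le hf hpq, zero_mul, zero_mul,
          smul_zero]

/-- The Moyal product on `ℂ[x,p][ħ]` is associative. -/
theorem moyal_assoc (f g h : WeylCarrier) :
    moyal (moyal f g) h = moyal f (moyal g h) := by
  set N := f.totalDegree + g.totalDegree + h.totalDegree with hN
  rw [moyal_moyal_left_eq_sum f g h (N := N) (by omega) (by omega),
    moyal_moyal_right_eq_sum f g h (N := N) (by omega) (by omega)]

end
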